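/- Let p ∈ ℚ[t] be monic of degree m ≥ 1 with companion matrix C ∈ ℚ^{m×m}, and let q = c·p ∈ ℤ[t], where c ∈ ℤ∖{0} is chosen so that q has coprime coefficients. Then the map h : ℤ^m[C] → ℤ[t]/(q) sending Σ_{i=0}^{ℓ} b_i C^i e₁ (with b_i ∈ ℤ, e₁ the first standard basis vector of ℚ^m) to the class of Σ_{i=0}^{ℓ} b_i t^i is a well-defined isomorphism of additive groups, and it satisfies h(C·v) = t·h(v) for every v ∈ ℤ^m[C]. -/

import Mathlib

open Matrix Polynomial

/-- `ℤ^m[M] = ⋃_{k≥1} (ℤ^m + Mℤ^m + ⋯ + M^{k-1}ℤ^m)`, the additive subgroup of `ℚ^m`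
generated by all vectors `M^j z` with `z ∈ ℤ^m`. -/
def intSpan (m : ℕ) (M : Matrix (Fin m) (Fin m) ℚ) : AddSubgroup (Fin m → ℚ) :=
  AddSubgroup.closure {x | ∃ (j : ℕ) (z : Fin m → ℤ), x = (M ^ j) *ᵥ fun i => (z i : ℚ)}

/-- The companion matrix of a monic polynomial `p` of degree `m`:
`C e_j = e_{j+1}` for `1 ≤ j < m` and `C e_m = -(a₀ e₁ + ⋯ + a_{m-1} e_m)`. -/
def companion (m : ℕ) (p : Polynomial ℚ) : Matrix (Fin m) (Fin m) ℚ :=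
  Matrix.of fun i j =>
    if (j : ℕ) + 1 = m then -p.coeff i else if (i : ℕ) = (j : ℕ) + 1 then 1 else 0


/-!
Everything is induced by the additive map `f ↦ f(C) e₁` from `ℤ[t]` to `ℚ^m`. Since
`C^i e₁ = e_{i+1}` for `i < m`, this map sends a polynomial of degree `< m` to its coefficient
vector, its image is `ℤ^m[C]`, and the last column of `C` gives `p(C) e₁ = 0`. Dividing by the
monic `p` then shows `F(C) e₁ = 0 ↔ p ∣ F` in `ℚ[t]`, and Gauss's lemma for the primitive
`q`, an associate of `p` over `ℚ`, turns this into `q ∣ f` in `ℤ[t]`. Finally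
`(t f)(C) e₁ = C (f(C) e₁)`.
-/

theorem Ideal.exists_quotient_addEquiv_range {R G : Type*} [CommRing R] [AddCommGroup G]
    (I : Ideal R) (φ : R →+ G) (hker : ∀ x, φ x = 0 ↔ x ∈ I) :
    ∃ e : (R ⧸ I) ≃+ φ.range, ∀ x, (e (Ideal.Quotient.mk I x) : G) = φ x := by
  let ψ := φ.rangeRestrict.toIntLinearMap
  have hψ : LinearMap.ker ψ = I.restrictScalars ℤ := by
    ext x
    simp [ψ, ← hker]
    rfl
  exact ⟨((Submodule.Quotient.restrictScalarsEquiv ℤ I).symm ≪≫ₗ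
    Submodule.quotEquivOfEq _ _ hψ.symm ≪≫ₗ
    ψ.quotKerEquivOfSurjective φ.rangeRestrict_surjective).toAddEquiv, fun _ => rfl⟩

theorem Matrix.aeval_C_mul_X_pow_mulVec {n K : Type*} [Fintype n] [DecidableEq n] [CommRing K]
    (M : Matrix n n K) (a : K) (i : ℕ) (v : n → K) :
    aeval M (Polynomial.C a * X ^ i) *ᵥ v = a • (M ^ i *ᵥ v) := by
  rw [map_mul, aeval_C, aeval_X_pow, Algebra.algebraMap_eq_smul_one, smul_mul_assoc, one_mul,
    Matrix.smul_mulVec]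

section Companion

variable {m : ℕ} (hm : 1 ≤ m) (p : ℚ[X])

theorem companion_mulVec_single {i : ℕ} (hi : i + 1 < m) :
    companion m p *ᵥ Pi.single ⟨i, by omega⟩ 1 = Pi.single ⟨i + 1, hi⟩ 1 := by
  funext j
  simp [companion, hi.ne, Pi.single_apply, Fin.ext_iff]

theorem companion_mulVec_single_last :
    companion m p *ᵥ Pi.single ⟨m - 1, by omega⟩ 1 = fun i : Fin m => -p.coeff i := by
  funext j
  simp [companion, Nat.sub_add_cancel hm]

theorem companion_pow_mulVec_single_zero {i : ℕ} (hi : i < m) :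
    companion m p ^ i *ᵥ Pi.single ⟨0, hm⟩ 1 = Pi.single ⟨i, hi⟩ 1 := by
  induction i with
  | zero => rw [pow_zero, Matrix.one_mulVec]
  | succ i ih =>
    rw [pow_succ', ← Matrix.mulVec_mulVec, ih (by omega), companion_mulVec_single p hi]

theorem sum_smul_companion_pow_mulVec_single_zero (a : Fin m → ℚ) :
    ∑ i : Fin m, a i • (companion m p ^ (i : ℕ) *ᵥ Pi.single ⟨0, hm⟩ 1) = a := by
  simp_rw [companion_pow_mulVec_single_zero hm p (Fin.is_lt _)]
  funext j
  simp [Pi.single_apply]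

theorem aeval_companion_mulVec_single_zero_of_natDegree_lt {r : ℚ[X]} (hr : r.natDegree < m) :
    aeval (companion m p) r *ᵥ Pi.single ⟨0, hm⟩ 1 = fun i : Fin m => r.coeff i := by
  conv_lhs => rw [r.as_sum_range_C_mul_X_pow' hr, ← Fin.sum_univ_eq_sum_range]
  simp only [map_sum, Matrix.sum_mulVec, Matrix.aeval_C_mul_X_pow_mulVec]
  exact sum_smul_companion_pow_mulVec_single_zero hm p _

theorem aeval_companion_self_mulVec_single_zero (hp : p.Monic) (hpd : p.natDegree = m) :
    aeval (companion m p) p *ᵥ Pi.single ⟨0, hm⟩ 1 = 0 := by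
  have hX : aeval (companion m p) (X ^ m : ℚ[X]) *ᵥ Pi.single ⟨0, hm⟩ 1 =
      fun i : Fin m => -p.coeff i := by
    have hpow : companion m p ^ m = companion m p * companion m p ^ (m - 1) := by
      rw [← pow_succ', Nat.sub_add_cancel hm]
    rw [aeval_X_pow, hpow, ← Matrix.mulVec_mulVec,
      companion_pow_mulVec_single_zero hm p (by omega), companion_mulVec_single_last hm p]
  have hsplit : p.eraseLead + X ^ m = p := by
    simpa [hp.leadingCoeff, hpd] using eraseLead_add_C_mul_X_pow p
  have hlow : p.eraseLead.natDegree < m := by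
    have := eraseLead_natDegree_le p
    omega
  rw [← congrArg (aeval (companion m p)) hsplit, map_add, Matrix.add_mulVec, hX,
    aeval_companion_mulVec_single_zero_of_natDegree_lt hm p hlow]
  funext i
  simp [eraseLead_coeff_of_ne _ (hpd ▸ i.is_lt.ne : (i : ℕ) ≠ p.natDegree)]

theorem aeval_companion_mulVec_single_zero_eq_zero_iff (hp : p.Monic) (hpd : p.natDegree = m)
    (F : ℚ[X]) : aeval (companion m p) F *ᵥ Pi.single ⟨0, hm⟩ 1 = 0 ↔ p ∣ F := by
  have hmod : aeval (companion m p) F *ᵥ Pi.single ⟨0, hm⟩ 1 =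
      aeval (companion m p) (F %ₘ p) *ᵥ Pi.single ⟨0, hm⟩ 1 := by
    conv_lhs => rw [← modByMonic_add_div F p]
    rw [mul_comm p, map_add, Matrix.add_mulVec, map_mul, ← Matrix.mulVec_mulVec,
      aeval_companion_self_mulVec_single_zero hm p hp hpd, Matrix.mulVec_zero, add_zero]
  have hp1 : p ≠ 1 := by
    rintro rfl
    simp at hpd
    omega
  have hlow := natDegree_modByMonic_lt F hp hp1
  rw [hmod, aeval_companion_mulVec_single_zero_of_natDegree_lt hm p (hpd ▸ hlow),
    ← modByMonic_eq_zero_iff_dvd hp]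
  constructor
  · intro h
    ext n
    by_cases hn : n < m
    · exact congrFun h ⟨n, hn⟩
    · exact coeff_eq_zero_of_natDegree_lt (by omega)
  · intro h
    funext i
    simp [h]

end Companion

noncomputable def evalAtCompanion {m : ℕ} (hm : 1 ≤ m) (p : ℚ[X]) : ℤ[X] →+ (Fin m → ℚ) where
  toFun f := aeval (companion m p) (f.map (Int.castRingHom ℚ)) *ᵥ Pi.single ⟨0, hm⟩ 1
  map_zero' := by rw [Polynomial.map_zero, map_zero, Matrix.zero_mulVec]
  map_add' f g := by rw [Polynomial.map_add, map_add, Matrix.add_mulVec]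

namespace evalAtCompanion

variable {m : ℕ} (hm : 1 ≤ m) (p : ℚ[X])

theorem apply (f : ℤ[X]) : evalAtCompanion hm p f =
    aeval (companion m p) (f.map (Int.castRingHom ℚ)) *ᵥ Pi.single ⟨0, hm⟩ 1 :=
  rfl

theorem C_mul_X_pow (b : ℤ) (i : ℕ) : evalAtCompanion hm p (Polynomial.C b * X ^ i) =
    (b : ℚ) • (companion m p ^ i *ᵥ Pi.single ⟨0, hm⟩ 1) := by
  rw [apply, Polynomial.map_mul, Polynomial.map_pow, map_X, map_C, eq_intCast,
    Matrix.aeval_C_mul_X_pow_mulVec]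

theorem X_pow_mul (j : ℕ) (f : ℤ[X]) :
    evalAtCompanion hm p (X ^ j * f) = companion m p ^ j *ᵥ evalAtCompanion hm p f := by
  simp only [apply, Polynomial.map_mul, Polynomial.map_pow, map_X, map_mul, aeval_X_pow,
    Matrix.mulVec_mulVec]

theorem eq_zero_iff (hp : p.Monic) (hpd : p.natDegree = m) {q : ℤ[X]} {c : ℤ} (hc : c ≠ 0)
    (hq : q.IsPrimitive) (hqc : q.map (Int.castRingHom ℚ) = Polynomial.C (c : ℚ) * p)
    (f : ℤ[X]) : evalAtCompanion hm p f = 0 ↔ q ∣ f := by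
  have hassoc : Associated (q.map (Int.castRingHom ℚ)) p := by
    rw [hqc]
    exact associated_unit_mul_left _ _ (isUnit_C.mpr (Int.cast_ne_zero.mpr hc).isUnit)
  rw [apply, aeval_companion_mulVec_single_zero_eq_zero_iff hm p hp hpd,
    IsPrimitive.Int.dvd_iff_map_cast_dvd_map_cast q f hq, hassoc.dvd_iff_dvd_left]

theorem range_eq : (evalAtCompanion hm p).range = intSpan m (companion m p) := by
  apply le_antisymm
  · rintro _ ⟨f, rfl⟩
    induction f using Polynomial.induction_on' with
    | add f g hf hg => rw [map_add]; exact add_mem hf hg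
    | monomial n a =>
      refine AddSubgroup.subset_closure ⟨n, Pi.single ⟨0, hm⟩ a, ?_⟩
      rw [← C_mul_X_pow_eq_monomial, C_mul_X_pow, ← Matrix.mulVec_smul]
      congr 1
      funext i
      simp [Pi.single_apply]
  · rw [intSpan, AddSubgroup.closure_le]
    rintro _ ⟨j, z, rfl⟩
    refine ⟨X ^ j * ∑ i : Fin m, Polynomial.C (z i) * X ^ (i : ℕ), ?_⟩
    rw [X_pow_mul, map_sum]
    simp only [C_mul_X_pow]
    rw [sum_smul_companion_pow_mulVec_single_zero hm p (fun i => (z i : ℚ))]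

end evalAtCompanion

theorem stmt2 (m : ℕ) (hm : 1 ≤ m) (p : Polynomial ℚ) (hp : p.Monic) (hpd : p.natDegree = m)
    (q : Polynomial ℤ) (c : ℤ) (hc : c ≠ 0) (hq : q.IsPrimitive)
    (hqc : q.map (Int.castRingHom ℚ) = Polynomial.C (c : ℚ) * p) :
    ∃ h : intSpan m (companion m p) ≃+ (Polynomial ℤ ⧸ Ideal.span {q}),
      -- `h` sends `Σ_{i=0}^{ℓ} b_i C^i e₁` to the class of `Σ_{i=0}^{ℓ} b_i t^i`
      -- (in particular this assignment is well defined)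
      (∀ (ℓ : ℕ) (b : ℕ → ℤ) (v : intSpan m (companion m p)),
        (v : Fin m → ℚ) =
            ∑ i ∈ Finset.range (ℓ + 1),
              (b i : ℚ) • ((companion m p ^ i) *ᵥ Pi.single (⟨0, hm⟩ : Fin m) (1 : ℚ)) →
          h v = Ideal.Quotient.mk (Ideal.span {q})
            (∑ i ∈ Finset.range (ℓ + 1), Polynomial.C (b i) * Polynomial.X ^ i)) ∧
      -- `h (C · v) = t · h v`
      (∀ v w : intSpan m (companion m p),
        (w : Fin m → ℚ) = companion m p *ᵥ (v : Fin m → ℚ) →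
          (h w : Polynomial ℤ ⧸ Ideal.span {q}) =
            Ideal.Quotient.mk (Ideal.span {q}) Polynomial.X * h v) := by
  obtain ⟨e, he⟩ := Ideal.exists_quotient_addEquiv_range (Ideal.span {q})
    (evalAtCompanion hm p) fun f => by
      rw [evalAtCompanion.eq_zero_iff hm p hp hpd hc hq hqc, Ideal.mem_span_singleton]
  let e' := e.trans (AddEquiv.addSubgroupCongr (evalAtCompanion.range_eq hm p))
  have he' (f : ℤ[X]) : (e' (Ideal.Quotient.mk _ f) : Fin m → ℚ) = evalAtCompanion hm p f :=
    he f
  have symm_eq_mk {v : intSpan m (companion m p)} {f : ℤ[X]}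
      (hv : (v : Fin m → ℚ) = evalAtCompanion hm p f) : e'.symm v = Ideal.Quotient.mk _ f := by
    rw [AddEquiv.symm_apply_eq, Subtype.ext_iff, hv, he']
  refine ⟨e'.symm, fun ℓ b v hv => symm_eq_mk ?_, fun v w hw => ?_⟩
  · simp only [hv, map_sum, evalAtCompanion.C_mul_X_pow]
  · obtain ⟨f, hf⟩ := Ideal.Quotient.mk_surjective (e'.symm v)
    have hv : (v : Fin m → ℚ) = evalAtCompanion hm p f := by
      rw [← he', hf, AddEquiv.apply_symm_apply]
    have hw' : (w : Fin m → ℚ) = evalAtCompanion hm p (X * f) := by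
      rw [hw, hv]
      simpa using (evalAtCompanion.X_pow_mul hm p 1 f).symm
    rw [symm_eq_mk hw', map_mul, hf]
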